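/- arXiv:0801.3788 — 9 statements merged into one kernel-verified Lean document; each statement's English description precedes it below -/
import Mathlib

section
/- Let G be a finite simple graph with vertex set V and edge set E, and let k be a positive integer. Then G is k-colorable if and only if the k-coloring polynomial system of G over the complex numbers has a common zero in ℂ^V, i.e., there exists a : V → ℂ with a_v^k − 1 = 0 for every v ∈ V and Σ_{t=0}^{k−1} a_u^t a_v^{k−1−t} = 0 for every edge {u,v} ∈ E. -/
/-!
Colour with the `k`-th roots of unity, of which a primitive root `ζ` provides exactly `k`.
For two `k`-th roots of unity `x, y` one has
`(x - y) * ∑ x ^ t * y ^ (k - 1 - t) = x ^ k - y ^ k = 0`, so the edge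
polynomial vanishes when `x ≠ y`; when `x = y` it equals `k * x ^ (k - 1) ≠ 0`.
Hence common zeros of the system are exactly proper colourings by the `k`-th roots of unity.
-/

open Finset Polynomial

theorem geom_sum₂_eq_zero_iff_ne {R : Type*} [CommRing R] [IsDomain R] {x y : R} {n : ℕ}
    (hn : (n : R) ≠ 0) (hx : x ≠ 0) (hxy : x ^ n = y ^ n) :
    ∑ i ∈ range n, x ^ i * y ^ (n - 1 - i) = 0 ↔ x ≠ y := by
  constructor
  · rintro hsum rfl
    rw [geom_sum₂_self] at hsum
    exact mul_ne_zero hn (pow_ne_zero _ hx) hsum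
  · intro hne
    have hprod := geom_sum₂_mul x y n
    rw [hxy, sub_self] at hprod
    exact (mul_eq_zero.mp hprod).resolve_right (sub_ne_zero.mpr hne)

namespace SimpleGraph

variable {V : Type*} (G : SimpleGraph V)

theorem colorable_iff_nonempty_coloring {α : Type*} [Fintype α] {n : ℕ}
    (hα : Fintype.card α = n) : G.Colorable n ↔ Nonempty (G.Coloring α) := by
  subst hα
  exact ⟨fun ⟨C⟩ => ⟨G.recolorOfEquiv (Fintype.equivFin α).symm C⟩,
    fun ⟨C⟩ => C.colorable⟩

theorem colorable_iff_exists_pow_eq_one_and_geom_sum₂_eq_zero {R : Type*} [CommRing R]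
    [IsDomain R] {ζ : R} {k : ℕ} [NeZero k] (hζ : IsPrimitiveRoot ζ k) :
    G.Colorable k ↔ ∃ a : V → R, (∀ v, a v ^ k = 1) ∧
      ∀ u v, G.Adj u v → ∑ t ∈ range k, a u ^ t * a v ^ (k - 1 - t) = 0 := by
  have hk : ((k : ℕ) : R) ≠ 0 := hζ.neZero'.out
  have mem_roots {x : R} : x ∈ nthRootsFinset k (1 : R) ↔ x ^ k = 1 :=
    mem_nthRootsFinset (NeZero.pos k) 1
  have edge_iff {x y : R} (hx : x ∈ nthRootsFinset k (1 : R))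
      (hy : y ∈ nthRootsFinset k (1 : R)) :
      ∑ t ∈ range k, x ^ t * y ^ (k - 1 - t) = 0 ↔ x ≠ y :=
    geom_sum₂_eq_zero_iff_ne hk (ne_zero_of_mem_nthRootsFinset one_ne_zero hx)
      ((mem_roots.mp hx).trans (mem_roots.mp hy).symm)
  rw [G.colorable_iff_nonempty_coloring ((Fintype.card_coe _).trans hζ.card_nthRootsFinset)]
  constructor
  · rintro ⟨C⟩
    exact ⟨fun v => C v, fun v => mem_roots.mp (C v).2, fun u v huv =>
      (edge_iff (C u).2 (C v).2).mpr fun h => C.valid huv (Subtype.ext h)⟩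
  · rintro ⟨a, ha, hedge⟩
    refine ⟨Coloring.mk (fun v => ⟨a v, mem_roots.mpr (ha v)⟩) fun {u v} huv h => ?_⟩
    exact (edge_iff (mem_roots.mpr (ha u)) (mem_roots.mpr (ha v))).mp (hedge u v huv)
      (congrArg Subtype.val h)

end SimpleGraph

theorem colorable_iff_complex_system_has_zero_general
    {V : Type*} (G : SimpleGraph V) (k : ℕ) (hk : 0 < k) :
    G.Colorable k ↔
      ∃ a : V → ℂ,
        (∀ v : V, a v ^ k - 1 = 0) ∧
        (∀ u v : V, G.Adj u v →
          (∑ t ∈ Finset.range k, a u ^ t * a v ^ (k - 1 - t)) = 0) := by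
  have : NeZero k := ⟨hk.ne'⟩
  simpa only [sub_eq_zero] using
    G.colorable_iff_exists_pow_eq_one_and_geom_sum₂_eq_zero (Complex.isPrimitiveRoot_exp k hk.ne')

/-- A finite simple graph `G` is `k`-colorable if and only if its
`k`-coloring polynomial system over `ℂ` has a common zero: there is `a : V → ℂ` with
`a v ^ k - 1 = 0` for every vertex `v` and
`∑_{t=0}^{k-1} a u ^ t * a v ^ (k-1-t) = 0` for every edge `{u,v}`. -/
theorem colorable_iff_complex_system_has_zero
    {V : Type*} [Fintype V] (G : SimpleGraph V) (k : ℕ) (hk : 0 < k) :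
    G.Colorable k ↔
      ∃ a : V → ℂ,
        (∀ v : V, a v ^ k - 1 = 0) ∧
        (∀ u v : V, G.Adj u v →
          (∑ t ∈ Finset.range k, a u ^ t * a v ^ (k - 1 - t)) = 0) :=
  colorable_iff_complex_system_has_zero_general G k hk
end

section
/- Let G be a finite simple graph with vertex set V and edge set E, and let k be a positive integer. A function a : V → ℂ is a common zero of the k-coloring polynomial system of G over ℂ if and only if a_v^k = 1 for every v ∈ V and a_u ≠ a_v for every edge {u,v} ∈ E; that is, the common zeros are exactly the proper colorings of G whose colors are k-th roots of unity. -/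
/-- For a finite simple graph `G` and `k ≥ 1`, a point `a : V → ℂ` is a
common zero of the `k`-coloring polynomial system over `ℂ` if and only if every value
`a v` is a `k`-th root of unity and adjacent vertices receive distinct values. -/
theorem common_zero_iff_proper_root_coloring
    {V : Type*} [Fintype V] (G : SimpleGraph V) (k : ℕ) (hk : 0 < k) (a : V → ℂ) :
    ((∀ v : V, a v ^ k - 1 = 0) ∧
      (∀ u v : V, G.Adj u v →
        (∑ t ∈ Finset.range k, a u ^ t * a v ^ (k - 1 - t)) = 0)) ↔
    ((∀ v : V, a v ^ k = 1) ∧ (∀ u v : V, G.Adj u v → a u ≠ a v)) := by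
  have hroot : ∀ v, a v ^ k - 1 = 0 ↔ a v ^ k = 1 := fun v => sub_eq_zero
  constructor
  · rintro ⟨h1, h2⟩
    refine ⟨fun v => (hroot v).1 (h1 v), fun u v huv heq => ?_⟩
    have hs := h2 u v huv
    rw [heq] at hs
    have hsum : (∑ t ∈ Finset.range k, a v ^ t * a v ^ (k - 1 - t))
        = (k : ℂ) * a v ^ (k - 1) := by
      have hc : ∀ t ∈ Finset.range k, a v ^ t * a v ^ (k - 1 - t) = a v ^ (k - 1) := by
        intro t ht
        rw [← pow_add]
        congr 1
        simp only [Finset.mem_range] at ht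
        omega
      rw [Finset.sum_congr rfl hc]
      simp [mul_comm]
    rw [hsum] at hs
    have hv0 : a v ≠ 0 := by
      intro h0
      have := (hroot v).1 (h1 v)
      rw [h0, zero_pow hk.ne'] at this
      exact zero_ne_one this
    rcases mul_eq_zero.1 hs with h | h
    · exact Nat.cast_ne_zero.2 hk.ne' h
    · exact pow_ne_zero _ hv0 h
  · rintro ⟨h1, h2⟩
    refine ⟨fun v => (hroot v).2 (h1 v), fun u v huv => ?_⟩
    have hne := sub_ne_zero_of_ne (h2 u v huv)
    have := geom_sum₂_mul (a u) (a v) k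
    rw [h1 u, h1 v, sub_self] at this
    exact (mul_eq_zero.1 this).resolve_right hne
end

section
/- Let K be an algebraically closed field and k a positive integer such that the characteristic of K does not divide k. A finite simple graph G with vertex set V and edge set E is k-colorable if and only if the k-coloring polynomial system of G over K has a common zero in K^V. -/
/-- Over an algebraically closed field `K` whose characteristic does not
divide `k ≥ 1`, a finite simple graph `G` is `k`-colorable if and only if the `k`-coloring
polynomial system of `G` over `K` has a common zero in `K^V`. -/
theorem colorable_iff_system_has_zero_algClosed
    {K : Type*} [Field K] [IsAlgClosed K] {V : Type*} [Fintype V]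
    (G : SimpleGraph V) (k : ℕ) (hk : 0 < k) (hchar : (k : K) ≠ 0) :
    G.Colorable k ↔
      ∃ a : V → K,
        (∀ v : V, a v ^ k - 1 = 0) ∧
        (∀ u v : V, G.Adj u v →
          (∑ t ∈ Finset.range k, a u ^ t * a v ^ (k - 1 - t)) = 0) := by
  classical
  have : NeZero ((k : K)) := ⟨hchar⟩
  constructor
  · rintro ⟨C⟩
    obtain ⟨ζ, hζ⟩ := HasEnoughRootsOfUnity.exists_primitiveRoot K k
    have hpow : ∀ i : ℕ, (ζ ^ i) ^ k = 1 := by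
      intro i
      rw [← pow_mul, mul_comm, pow_mul, hζ.pow_eq_one, one_pow]
    refine ⟨fun v => ζ ^ (C v : ℕ), fun v => by rw [hpow, sub_self], fun u v huv => ?_⟩
    have hne : ζ ^ (C u : ℕ) ≠ ζ ^ (C v : ℕ) := fun h =>
      C.valid huv (Fin.ext (hζ.pow_inj (C u).isLt (C v).isLt h))
    have hgs := geom_sum₂_mul (ζ ^ (C u : ℕ)) (ζ ^ (C v : ℕ)) k
    rw [hpow, hpow, sub_self] at hgs
    exact (mul_eq_zero.mp hgs).resolve_right (sub_ne_zero.mpr hne)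
  · rintro ⟨a, hroot, hedge⟩
    have hunit : ∀ v, a v ≠ 0 := by
      intro v h
      have := hroot v
      rw [h, zero_pow hk.ne', zero_sub, neg_eq_zero] at this
      exact one_ne_zero this
    have hne : ∀ u v, G.Adj u v → a u ≠ a v := by
      intro u v huv h
      have hs := hedge u v huv
      rw [h] at hs
      have hsum : ∑ t ∈ Finset.range k, a v ^ t * a v ^ (k - 1 - t)
          = (k : K) * a v ^ (k - 1) := by
        rw [Finset.sum_congr rfl (fun t ht => ?_), Finset.sum_const, Finset.card_range,
          nsmul_eq_mul]
        have htk := Finset.mem_range.mp ht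
        rw [← pow_add]
        congr 1
        omega
      rw [hsum] at hs
      rcases mul_eq_zero.mp hs with h' | h'
      · exact hchar h'
      · exact pow_ne_zero _ (hunit v) h'
    set s : Finset K := (Polynomial.nthRoots k (1 : K)).toFinset with hs
    have hmem : ∀ v, a v ∈ s := by
      intro v
      rw [hs, Multiset.mem_toFinset, Polynomial.mem_nthRoots hk]
      exact sub_eq_zero.mp (hroot v)
    let C : G.Coloring s := SimpleGraph.Coloring.mk (fun v => ⟨a v, hmem v⟩)
      (fun {u v} huv h => hne u v huv (congrArg Subtype.val h))
    have hcard : Fintype.card s ≤ k := by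
      rw [Fintype.card_coe]
      exact le_trans (Multiset.toFinset_card_le _) (Polynomial.card_nthRoots k (1:K))
    exact C.colorable.mono hcard
end

section
/- Let G be a finite simple graph with vertex set V and edge set E, and let F̄₂ denote the algebraic closure of the field with two elements. Then G is 3-colorable if and only if the 3-coloring polynomial system of G over F̄₂ has a common zero in F̄₂^V, i.e., there exists a : V → F̄₂ with a_v^3 + 1 = 0 for every v ∈ V and a_u^2 + a_u a_v + a_v^2 = 0 for every edge {u,v} ∈ E. -/
/-!
In characteristic `2` the vertex polynomial `x ^ 3 + 1` equals `x ^ 3 - 1`, so its zeros are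
the cube roots of unity, three distinct elements of `F̄₂` since `3 ≠ 0` there; they serve as
the three colours. For two cube roots of unity `x` and `y` we have
`(x - y) * (x ^ 2 + x * y + y ^ 2) = x ^ 3 - y ^ 3 = 0`, while at `x = y` the edge polynomial
is `3 * x ^ 2 ≠ 0`. Hence the edge polynomial vanishes exactly when the colours differ.
-/

open Finset Polynomial

theorem sq_add_mul_add_sq_eq_zero_iff_ne {R : Type*} [CommRing R] [IsDomain R]
    (h3 : (3 : R) ≠ 0) {x y : R} (hx : x ≠ 0) (hxy : x ^ 3 = y ^ 3) :
    x ^ 2 + x * y + y ^ 2 = 0 ↔ x ≠ y := by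
  constructor
  · rintro h rfl
    exact mul_ne_zero h3 (pow_ne_zero 2 hx) (by linear_combination h)
  · intro hne
    have hfactor : (x - y) * (x ^ 2 + x * y + y ^ 2) = 0 := by linear_combination hxy
    exact (mul_eq_zero.mp hfactor).resolve_left (sub_ne_zero.mpr hne)

namespace SimpleGraph

variable {V : Type*} (G : SimpleGraph V)

theorem colorable_card_iff_exists_mem_finset {α : Type*} (s : Finset α) :
    G.Colorable #s ↔ ∃ a : V → α, (∀ v, a v ∈ s) ∧ ∀ u v, G.Adj u v → a u ≠ a v := by
  constructor
  · intro hc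
    let C : G.Coloring s := hc.toColoring (by simp)
    exact ⟨fun v => C v, fun v => (C v).2,
      fun u v huv => Subtype.coe_injective.ne (C.valid huv)⟩
  · rintro ⟨a, has, hne⟩
    let C : G.Coloring s :=
      Coloring.mk (fun v => ⟨a v, has v⟩) fun huv h => hne _ _ huv (congrArg Subtype.val h)
    simpa using C.colorable

theorem colorable_iff_exists_pow_eq_one {R : Type*} [CommRing R] [IsDomain R] {n : ℕ}
    (hn : 0 < n) {ζ : R} (hζ : IsPrimitiveRoot ζ n) :
    G.Colorable n ↔ ∃ a : V → R, (∀ v, a v ^ n = 1) ∧ ∀ u v, G.Adj u v → a u ≠ a v := by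
  have h := G.colorable_card_iff_exists_mem_finset (nthRootsFinset n (1 : R))
  rw [hζ.card_nthRootsFinset] at h
  simpa only [mem_nthRootsFinset hn] using h

theorem colorable_three_iff_exists_cube_roots {R : Type*} [CommRing R] [IsDomain R] {ζ : R}
    (hζ : IsPrimitiveRoot ζ 3) :
    G.Colorable 3 ↔ ∃ a : V → R, (∀ v, a v ^ 3 = 1) ∧
      ∀ u v, G.Adj u v → a u ^ 2 + a u * a v + a v ^ 2 = 0 := by
  have h3 : (3 : R) ≠ 0 := by exact_mod_cast hζ.neZero'.out
  rw [G.colorable_iff_exists_pow_eq_one three_pos hζ]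
  refine exists_congr fun a => and_congr_right fun ha =>
    forall₂_congr fun u v => imp_congr_right fun _ => ?_
  exact (sq_add_mul_add_sq_eq_zero_iff_ne h3 (ne_zero_pow three_ne_zero (by simp [ha]))
    ((ha u).trans (ha v).symm)).symm

end SimpleGraph

theorem three_colorable_iff_system_has_zero_F2bar_general
    {V : Type*} (G : SimpleGraph V) :
    G.Colorable 3 ↔
      ∃ a : V → AlgebraicClosure (ZMod 2),
        (∀ v : V, a v ^ 3 + 1 = 0) ∧
        (∀ u v : V, G.Adj u v → a u ^ 2 + a u * a v + a v ^ 2 = 0) := by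
  set K := AlgebraicClosure (ZMod 2)
  have : NeZero (3 : K) :=
    ⟨fun h => one_ne_zero (by linear_combination h - CharTwo.two_eq_zero (R := K))⟩
  obtain ⟨ζ, hζ⟩ := HasEnoughRootsOfUnity.exists_primitiveRoot K 3
  simp only [CharTwo.add_eq_zero (b := (1 : K))]
  exact G.colorable_three_iff_exists_cube_roots hζ

/-- A finite simple graph `G` is `3`-colorable if and only if the
`3`-coloring polynomial system of `G` over the algebraic closure of `𝔽₂` has a common
zero: there is `a : V → F̄₂` with `a v ^ 3 + 1 = 0` for every vertex `v` and
`a u ^ 2 + a u * a v + a v ^ 2 = 0` for every edge `{u,v}`. -/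
theorem three_colorable_iff_system_has_zero_F2bar
    {V : Type*} [Fintype V] (G : SimpleGraph V) :
    G.Colorable 3 ↔
      ∃ a : V → AlgebraicClosure (ZMod 2),
        (∀ v : V, a v ^ 3 + 1 = 0) ∧
        (∀ u v : V, G.Adj u v → a u ^ 2 + a u * a v + a v ^ 2 = 0) :=
  three_colorable_iff_system_has_zero_F2bar_general G
end

section
/- Let G be a finite simple graph with vertex set V and edge set E, and let f_1,…,f_s denote the polynomials of the 3-coloring polynomial system of G over the field F₂ = ZMod 2. Then G is not 3-colorable if and only if there exist polynomials β_1,…,β_s ∈ F₂[x_v : v ∈ V] with 1 = Σ_{i=1}^s β_i f_i. -/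
/-!
Over an algebraically closed field `K` of characteristic `≠ 3` the common zeros of the system
are the maps `x : V → K` with `x v ^ 3 = -1` for all `v` and `x u ≠ x w` on edges: for
`a ^ 3 = b ^ 3 ≠ 0` we have `(a - b) (a² + ab + b²) = 0`, while `a² + a·a + a² = 3a² ≠ 0`.
Since `-1` has exactly three cube roots in `K`, these zeros are the proper `3`-colourings of `G`.
The weak Nullstellensatz, applied to the ideal over `k` generated by the system with zeros
taken in the algebraic closure of `k`, shows that this ideal contains `1` iff `G` has no
such colouring. This works over any field `k` of characteristic `≠ 3`, in particular `𝔽₂`.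
-/

open MvPolynomial Finset

lemma sq_add_mul_add_sq_eq_zero_iff_ne_s9 {K : Type*} [Field K] (h3 : (3 : K) ≠ 0) {a b : K}
    (ha : a ≠ 0) (hab : a ^ 3 = b ^ 3) : a ^ 2 + a * b + b ^ 2 = 0 ↔ a ≠ b := by
  constructor
  · rintro h rfl
    have : 3 * a ^ 2 = 0 := by linear_combination h
    simp_all
  · intro hne
    have : (a - b) * (a ^ 2 + a * b + b ^ 2) = 0 := by linear_combination hab
    exact (mul_eq_zero.1 this).resolve_left (sub_ne_zero.2 hne)

lemma IsPrimitiveRoot.card_nthRootsFinset_of_pow_eq {R : Type*} [CommRing R] [IsDomain R]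
    {ζ : R} {n : ℕ} (hζ : IsPrimitiveRoot ζ n) {a α : R} (ha : a ≠ 0) (hα : α ^ n = a) :
    #(Polynomial.nthRootsFinset n a) = n := by
  classical
  rw [Polynomial.nthRootsFinset_def, Multiset.toFinset_card_of_nodup (hζ.nthRoots_nodup ha),
    hζ.card_nthRoots, if_pos ⟨α, hα⟩]

lemma SimpleGraph.colorable_iff_nonempty_coloring_of_card_eq {V α : Type*} [Fintype α]
    {G : SimpleGraph V} {n : ℕ} (h : Fintype.card α = n) :
    G.Colorable n ↔ Nonempty (G.Coloring α) :=
  ⟨fun hc => ⟨hc.toColoring h.ge⟩, fun ⟨c⟩ => h ▸ c.colorable⟩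

theorem MvPolynomial.one_mem_iff_zeroLocus_eq_empty {σ k K : Type*} [Finite σ] [Field k]
    [Field K] [Algebra k K] [IsAlgClosed K] {I : Ideal (MvPolynomial σ k)} :
    1 ∈ I ↔ zeroLocus K I = ∅ := by
  rw [← Ideal.eq_top_iff_one]
  refine ⟨fun h => h ▸ zeroLocus_top, fun h => ?_⟩
  rw [← Ideal.radical_eq_top, ← vanishingIdeal_zeroLocus_eq_radical (K := K), h,
    vanishingIdeal_empty]

namespace ThreeColoring

variable {V : Type*}

section CommRing

variable (k : Type*) [CommRing k]

noncomputable def vertexPoly (v : V) : MvPolynomial V k := X v ^ 3 + 1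

noncomputable def edgePoly : Sym2 V → MvPolynomial V k :=
  Sym2.lift ⟨fun u w => X u ^ 2 + X u * X w + X w ^ 2, fun u w => by ring⟩

noncomputable def ideal (G : SimpleGraph V) : Ideal (MvPolynomial V k) :=
  Ideal.span (Set.range (vertexPoly k) ∪ edgePoly k '' G.edgeSet)

variable {k}

theorem mem_ideal_iff [Fintype V] {G : SimpleGraph V} [Fintype G.edgeSet]
    {p : MvPolynomial V k} :
    p ∈ ideal k G ↔ ∃ (β : V → MvPolynomial V k) (γ : Sym2 V → MvPolynomial V k),
      p = ∑ v, β v * vertexPoly k v + ∑ e ∈ G.edgeFinset, γ e * edgePoly k e := by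
  simp only [ideal, Ideal.span_union, Submodule.mem_sup, Ideal.mem_span_range_iff_exists_fun,
    ← G.coe_edgeFinset, Submodule.mem_span_image_finset_iff_exists_fun', smul_eq_mul]
  constructor
  · rintro ⟨_, ⟨β, rfl⟩, _, ⟨γ, rfl⟩, rfl⟩
    exact ⟨β, γ, rfl⟩
  · rintro ⟨β, γ, rfl⟩
    exact ⟨_, ⟨β, rfl⟩, _, ⟨γ, rfl⟩, rfl⟩

end CommRing

section Field

variable {k K : Type*} [Field k] [Field K] [Algebra k K]

@[simp]
lemma aeval_vertexPoly (x : V → K) (v : V) : aeval x (vertexPoly k v) = x v ^ 3 + 1 := by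
  simp [vertexPoly]

@[simp]
lemma aeval_edgePoly_mk (x : V → K) (u w : V) :
    aeval x (edgePoly k s(u, w)) = x u ^ 2 + x u * x w + x w ^ 2 := by
  simp [edgePoly]

lemma mem_zeroLocus_ideal_iff {G : SimpleGraph V} {x : V → K} :
    x ∈ zeroLocus K (ideal k G) ↔
      (∀ v, x v ^ 3 = -1) ∧ ∀ ⦃u w⦄, G.Adj u w → x u ^ 2 + x u * x w + x w ^ 2 = 0 := by
  rw [ideal, zeroLocus_span]
  simp only [Set.mem_ofPred_eq, Set.mem_union, or_imp, forall_and, Set.forall_mem_range,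
    Set.forall_mem_image, Sym2.forall, SimpleGraph.mem_edgeSet, aeval_vertexPoly, aeval_edgePoly_mk,
    add_eq_zero_iff_eq_neg]

lemma nonempty_zeroLocus_ideal_iff (h3 : (3 : K) ≠ 0) (G : SimpleGraph V) :
    (zeroLocus K (ideal k G)).Nonempty ↔
      Nonempty (G.Coloring (Polynomial.nthRootsFinset 3 (-1 : K))) := by
  have mem_roots {y : K} : y ∈ Polynomial.nthRootsFinset 3 (-1 : K) ↔ y ^ 3 = -1 :=
    Polynomial.mem_nthRootsFinset (by norm_num) _
  have edge_iff {y z : K} (hy : y ^ 3 = -1) (hz : z ^ 3 = -1) :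
      y ^ 2 + y * z + z ^ 2 = 0 ↔ y ≠ z :=
    sq_add_mul_add_sq_eq_zero_iff_ne_s9 h3 (by rintro rfl; norm_num at hy) (hy.trans hz.symm)
  constructor
  · rintro ⟨x, hx⟩
    obtain ⟨hvert, hedge⟩ := mem_zeroLocus_ideal_iff.1 hx
    refine ⟨.mk (fun v => ⟨x v, mem_roots.2 (hvert v)⟩) fun {u w} huw h => ?_⟩
    exact (edge_iff (hvert u) (hvert w)).1 (hedge huw) (congrArg Subtype.val h)
  · rintro ⟨c⟩
    have hvert (v : V) : (c v : K) ^ 3 = -1 := mem_roots.1 (c v).2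
    refine ⟨fun v => c v, mem_zeroLocus_ideal_iff.2 ⟨hvert, fun u w huw => ?_⟩⟩
    exact (edge_iff (hvert u) (hvert w)).2 (Subtype.val_injective.ne (c.valid huw))

end Field

theorem not_colorable_iff_one_mem_ideal [Fintype V] {k : Type*} [Field k] (h3 : (3 : k) ≠ 0)
    (G : SimpleGraph V) :
    ¬ G.Colorable 3 ↔ 1 ∈ ideal k G := by
  let K := AlgebraicClosure k
  have h3K : (3 : K) ≠ 0 := by
    rw [← map_ofNat (algebraMap k K) 3]
    exact (map_ne_zero _).2 h3
  have : NeZero ((3 : ℕ) : K) := ⟨by exact_mod_cast h3K⟩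
  obtain ⟨ζ, hζ⟩ := HasEnoughRootsOfUnity.exists_primitiveRoot K 3
  have hcard : Fintype.card (Polynomial.nthRootsFinset 3 (-1 : K)) = 3 := by
    rw [Fintype.card_coe]
    exact hζ.card_nthRootsFinset_of_pow_eq (α := -1) (neg_ne_zero.2 one_ne_zero) (by norm_num)
  rw [one_mem_iff_zeroLocus_eq_empty (K := K), ← Set.not_nonempty_iff_eq_empty,
    nonempty_zeroLocus_ideal_iff h3K, G.colorable_iff_nonempty_coloring_of_card_eq hcard]

end ThreeColoring

/-- A finite simple graph `G` is *not* `3`-colorable if and only if there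
is a Nullstellensatz certificate `1 = ∑ βᵢ fᵢ` over `𝔽₂ = ZMod 2`, where the `fᵢ` are the
polynomials of the `3`-coloring system of `G`: the vertex polynomials `X v ^ 3 + 1` and,
for each edge `{u,w}`, the edge polynomial `X u ^ 2 + X u * X w + X w ^ 2`. -/
theorem not_three_colorable_iff_F2_certificate
    {V : Type*} [Fintype V] (G : SimpleGraph V) [DecidableRel G.Adj] :
    ¬ G.Colorable 3 ↔
      ∃ (β : V → MvPolynomial V (ZMod 2)) (γ : Sym2 V → MvPolynomial V (ZMod 2)),
        (1 : MvPolynomial V (ZMod 2)) =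
          (∑ v : V, β v * (MvPolynomial.X v ^ 3 + 1)) +
          ∑ e ∈ G.edgeFinset, γ e *
            Sym2.lift ⟨fun u w =>
                MvPolynomial.X u ^ 2 + MvPolynomial.X u * MvPolynomial.X w +
                  MvPolynomial.X w ^ 2,
              fun u w => by ring⟩ e :=
  (ThreeColoring.not_colorable_iff_one_mem_ideal (by decide) G).trans
    ThreeColoring.mem_ideal_iff
end

section
/- Let K be a field, let G be a finite group acting on finite types R and C, and suppose (|G| : K) ≠ 0, i.e., the order of G is invertible in K. Let M : R → C → K satisfy M(g•r)(g•c) = M(r)(c) for all g ∈ G, r ∈ R, c ∈ C, and let b : R → K satisfy b(g•r) = b(r) for all g ∈ G, r ∈ R. Then there exists y : C → K with Σ_{c ∈ C} M(r)(c)·y(c) = b(r) for every r ∈ R if and only if there exists a function ȳ on the quotient C/G of C by the orbit equivalence relation of the G-action such that Σ_{c ∈ C} M(r)(c)·ȳ([c]) = b(r) for every r ∈ R, where [c] denotes the orbit of c. (The latter system is the orbit-matrix system, since grouping the sum by orbits gives Σ_{orbits O} (Σ_{c ∈ O} M(r)(c))·ȳ(O) = b(r).) -/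
/-- Let a finite group `G` act on finite index types `R` (rows) and `C`
(columns), let `K` be a field in which `|G|` is invertible, let `M : R → C → K` be
invariant under the simultaneous action and `b : R → K` invariant under the row action.
Then the linear system `M y = b` has a solution if and only if the orbit-matrix system has
a solution, i.e. there is a function `ȳ` on the quotient `C/G` by the orbit equivalence
relation with `∑ c, M r c * ȳ ⟦c⟧ = b r` for every row `r`. -/
theorem solution_iff_orbit_solution
    {K : Type*} [Field K] {G R C : Type*} [Group G] [Fintype G] [Fintype R] [Fintype C]
    [MulAction G R] [MulAction G C]
    (hG : (Fintype.card G : K) ≠ 0)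
    (M : R → C → K) (hM : ∀ (g : G) (r : R) (c : C), M (g • r) (g • c) = M r c)
    (b : R → K) (hb : ∀ (g : G) (r : R), b (g • r) = b r) :
    (∃ y : C → K, ∀ r : R, ∑ c : C, M r c * y c = b r) ↔
    (∃ ybar : Quotient (MulAction.orbitRel G C) → K,
      ∀ r : R, ∑ c : C, M r c * ybar (Quotient.mk (MulAction.orbitRel G C) c) = b r) := by
  constructor
  · rintro ⟨y, hy⟩
    -- average y over the group
    set z : C → K := fun c => (Fintype.card G : K)⁻¹ * ∑ g : G, y (g • c) with hz
    have hzconst : ∀ c c' : C, MulAction.orbitRel G C c c' → z c = z c' := by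
      intro c c' hcc'
      obtain ⟨h, rfl⟩ := hcc'
      simp only [hz]
      congr 1
      exact Fintype.sum_equiv (Equiv.mulRight (h : G))
        (fun g => y (g • ((h : G) • c'))) (fun g => y (g • c'))
        (fun g => by simp [mul_smul])
    refine ⟨Quotient.lift z hzconst, fun r => ?_⟩
    have key : ∀ g : G, ∑ c : C, M r c * y (g • c) = b r := by
      intro g
      rw [← hb g r, ← hy (g • r)]
      refine Fintype.sum_equiv (MulAction.toPerm g) _ _ (fun c => ?_)
      rw [MulAction.toPerm_apply, hM g r c]
    calc ∑ c : C, M r c * Quotient.lift z hzconst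
            (Quotient.mk (MulAction.orbitRel G C) c)
        = ∑ c : C, ∑ g : G, (Fintype.card G : K)⁻¹ * (M r c * y (g • c)) := by
          refine Finset.sum_congr rfl fun c _ => ?_
          show M r c * ((Fintype.card G : K)⁻¹ * ∑ g : G, y (g • c)) = _
          rw [Finset.mul_sum, Finset.mul_sum]
          exact Finset.sum_congr rfl fun g _ => by ring
      _ = ∑ g : G, ∑ c : C, (Fintype.card G : K)⁻¹ * (M r c * y (g • c)) :=
          Finset.sum_comm
      _ = ∑ g : G, (Fintype.card G : K)⁻¹ * b r := by
          refine Finset.sum_congr rfl fun g _ => ?_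
          rw [← Finset.mul_sum, key g]
      _ = b r := by
          simp only [Finset.sum_const, Finset.card_univ, nsmul_eq_mul]
          field_simp
  · rintro ⟨ybar, hybar⟩
    exact ⟨fun c => ybar (Quotient.mk (MulAction.orbitRel G C) c), hybar⟩
end

section
/- Let G be a finite simple graph with vertex set V and edge set E, and let f_1,…,f_s denote the polynomials of the 3-coloring polynomial system of G over the field F₂ = ZMod 2. If there exist a nonzero exponent vector α : V → ℕ (α ≠ 0) and polynomials β_1,…,β_s ∈ F₂[x_v : v ∈ V] such that the monomial x^α = Π_{v} x_v^{α(v)} satisfies x^α = Σ_{i=1}^s β_i f_i, then G is not 3-colorable. -/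
noncomputable section

local notation "K" => GaloisField 2 2

lemma gf4_card_units : Nat.card Kˣ = 3 := by
  rw [Nat.card_units]
  have := GaloisField.card 2 2 (by norm_num)
  omega

lemma gf4_cube (a : Kˣ) : (a : K) ^ 3 = 1 := by
  have h : a ^ Nat.card Kˣ = 1 := pow_card_eq_one'
  rw [gf4_card_units] at h
  have : ((a ^ 3 : Kˣ) : K) = ((1 : Kˣ) : K) := by rw [h]
  simpa using this

lemma gf4_two : (2 : K) = 0 := by
  exact_mod_cast CharP.cast_eq_zero K 2

lemma gf4_edge (a b : Kˣ) (hab : a ≠ b) :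
    (a : K) ^ 2 + (a : K) * b + (b : K) ^ 2 = 0 := by
  have h2 := gf4_two
  have hne : (a : K) + b ≠ 0 := by
    intro hh
    exact hab (Units.ext (by linear_combination hh - (b:K) * h2))
  have key2 : ((a:K) + b) * ((a:K)^2 + (a:K)*b + (b:K)^2) = 0 := by
    linear_combination ((a:K)^2*b + (a:K)*(b:K)^2 + 1) * h2
      + gf4_cube a + gf4_cube b
  exact (mul_eq_zero.mp key2).resolve_left hne

/-- If some nonzero monomial `x^α = ∏ v, X v ^ α v` can be written as a
combination `x^α = ∑ βᵢ fᵢ` over `𝔽₂ = ZMod 2` of the polynomials of the `3`-coloring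
system of a finite simple graph `G` (vertex polynomials `X v ^ 3 + 1` and edge polynomials
`X u ^ 2 + X u * X w + X w ^ 2`), then `G` is not `3`-colorable. -/
theorem not_three_colorable_of_monomial_certificate
    {V : Type*} [Fintype V] [DecidableEq V] (G : SimpleGraph V) [DecidableRel G.Adj]
    (α : V → ℕ) (hα : α ≠ 0)
    (h : ∃ (β : V → MvPolynomial V (ZMod 2)) (γ : Sym2 V → MvPolynomial V (ZMod 2)),
        (∏ v : V, (MvPolynomial.X v : MvPolynomial V (ZMod 2)) ^ α v) =
          (∑ v : V, β v * (MvPolynomial.X v ^ 3 + 1)) +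
          ∑ e ∈ G.edgeFinset, γ e *
            Sym2.lift ⟨fun u w =>
                MvPolynomial.X u ^ 2 + MvPolynomial.X u * MvPolynomial.X w +
                  MvPolynomial.X w ^ 2,
              fun u w => by ring⟩ e) :
    ¬ G.Colorable 3 := by
  rintro hc
  obtain ⟨C⟩ := hc
  obtain ⟨β, γ, h⟩ := h
  obtain ⟨f, hf3, hfe, hf0⟩ : ∃ f : V → K, (∀ v, f v ^ 3 = 1) ∧
      (∀ u w, G.Adj u w → f u ^ 2 + f u * f w + f w ^ 2 = 0) ∧ (∀ v, f v ≠ 0) := by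
    haveI : Fintype Kˣ := Fintype.ofFinite _
    have hcard : Fintype.card Kˣ = 3 := by
      rw [← Nat.card_eq_fintype_card]; exact gf4_card_units
    obtain ⟨e⟩ : Nonempty (Fin 3 ≃ Kˣ) := ⟨(Fintype.equivFinOfCardEq hcard).symm⟩
    exact ⟨fun v => (e (C v) : K), fun v => gf4_cube _,
      fun u w hadj => gf4_edge _ _ (fun hh => C.valid hadj (e.injective hh)),
      fun v => Units.ne_zero _⟩
  have hev := congrArg (MvPolynomial.aeval f) h
  rw [map_add] at hev
  have h1 : (MvPolynomial.aeval f)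
      (∑ v : V, β v * (MvPolynomial.X v ^ 3 + 1)) = 0 := by
    rw [map_sum]
    refine Finset.sum_eq_zero fun v _ => ?_
    rw [map_mul, map_add, map_pow, MvPolynomial.aeval_X, map_one, hf3 v]
    have : (1 : K) + 1 = 0 := by linear_combination gf4_two
    rw [this, mul_zero]
  have h2 : (MvPolynomial.aeval f)
      (∑ s ∈ G.edgeFinset, γ s *
        Sym2.lift ⟨fun u w =>
            MvPolynomial.X u ^ 2 + MvPolynomial.X u * MvPolynomial.X w +
              MvPolynomial.X w ^ 2, fun u w => by ring⟩ s) = 0 := by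
    rw [map_sum]
    refine Finset.sum_eq_zero fun s hs => ?_
    induction s using Sym2.ind with
    | _ u w =>
      have hadj : G.Adj u w := by
        rwa [SimpleGraph.mem_edgeFinset, SimpleGraph.mem_edgeSet] at hs
      rw [map_mul, Sym2.lift_mk, map_add, map_add, map_pow, map_pow, map_mul,
        MvPolynomial.aeval_X, MvPolynomial.aeval_X, hfe u w hadj, mul_zero]
  rw [h1, h2, add_zero] at hev
  have hL : (MvPolynomial.aeval f)
      (∏ v : V, (MvPolynomial.X v : MvPolynomial V (ZMod 2)) ^ α v) ≠ 0 := by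
    rw [map_prod]
    refine Finset.prod_ne_zero_iff.mpr fun v _ => ?_
    rw [map_pow, MvPolynomial.aeval_X]
    exact pow_ne_zero _ (hf0 v)
  exact hL hev
end
end

section
/- Let K be a field and let G be a connected finite simple graph with vertex set V and edge set E, and fix a vertex v₀ ∈ V. Then in K[x_v : v ∈ V], the ideal generated by all vertex polynomials x_v^3 + 1 (v ∈ V) together with all edge polynomials x_u^2 + x_u x_v + x_v^2 ({u,v} ∈ E) is equal to the ideal generated by the single vertex polynomial x_{v₀}^3 + 1 together with all the edge polynomials. -/
open MvPolynomial

/-- For a connected finite simple graph `G` and any field `K`, the ideal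
of `K[x_v : v ∈ V]` generated by all vertex polynomials `X v ^ 3 + 1` together with all
edge polynomials `X u ^ 2 + X u * X w + X w ^ 2` equals the ideal generated by the single
vertex polynomial `X v₀ ^ 3 + 1` together with all the edge polynomials. -/
theorem ideal_span_single_vertex_polynomial
    {K : Type*} [Field K] {V : Type*} [Fintype V] (G : SimpleGraph V)
    (hG : G.Connected) (v₀ : V) :
    Ideal.span ({p : MvPolynomial V K | ∃ v : V, p = MvPolynomial.X v ^ 3 + 1} ∪
        {p : MvPolynomial V K | ∃ u w : V, G.Adj u w ∧
          p = MvPolynomial.X u ^ 2 + MvPolynomial.X u * MvPolynomial.X w +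
                MvPolynomial.X w ^ 2}) =
    Ideal.span ({MvPolynomial.X v₀ ^ 3 + 1} ∪
        {p : MvPolynomial V K | ∃ u w : V, G.Adj u w ∧
          p = MvPolynomial.X u ^ 2 + MvPolynomial.X u * MvPolynomial.X w +
                MvPolynomial.X w ^ 2}) := by
  set E : Set (MvPolynomial V K) :=
    {p : MvPolynomial V K | ∃ u w : V, G.Adj u w ∧
      p = MvPolynomial.X u ^ 2 + MvPolynomial.X u * MvPolynomial.X w + MvPolynomial.X w ^ 2}
  set I : Ideal (MvPolynomial V K) :=
    Ideal.span ({MvPolynomial.X v₀ ^ 3 + 1} ∪ E) with hI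
  -- step: adjacency propagates membership of vertex polynomials
  have step : ∀ a b : V, G.Adj a b →
      (X a ^ 3 + 1 : MvPolynomial V K) ∈ I → (X b ^ 3 + 1 : MvPolynomial V K) ∈ I := by
    intro a b hab ha
    have he : (X b ^ 2 + X b * X a + X a ^ 2 : MvPolynomial V K) ∈ I :=
      Ideal.subset_span (Or.inr ⟨b, a, hab.symm, rfl⟩)
    have : (X b ^ 3 + 1 : MvPolynomial V K) =
        (X a ^ 3 + 1) + (X b - X a) * (X b ^ 2 + X b * X a + X a ^ 2) := by ring
    rw [this]
    exact I.add_mem ha (I.mul_mem_left _ he)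
  have walkstep : ∀ a b : V, G.Walk a b →
      (X a ^ 3 + 1 : MvPolynomial V K) ∈ I → (X b ^ 3 + 1 : MvPolynomial V K) ∈ I := by
    intro a b w
    induction w with
    | nil => exact fun h => h
    | cons h p ih => exact fun ha => ih (step _ _ h ha)
  have hv : ∀ v : V, (X v ^ 3 + 1 : MvPolynomial V K) ∈ I := by
    intro v
    obtain ⟨w⟩ := hG.1 v₀ v
    exact walkstep _ _ w (Ideal.subset_span (Or.inl rfl))
  apply le_antisymm
  · rw [Ideal.span_le]
    rintro p (⟨v, rfl⟩ | hp)
    · exact hv v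
    · exact Ideal.subset_span (Or.inr hp)
  · rw [Ideal.span_le]
    rintro p (rfl | hp)
    · exact Ideal.subset_span (Or.inl ⟨v₀, rfl⟩)
    · exact Ideal.subset_span (Or.inr hp)
end

section
/- Let n ≥ 1 and let W be the odd wheel graph on 2n + 2 vertices, consisting of a cycle on 2n + 1 vertices together with a hub vertex adjacent to every cycle vertex. Let f_1,…,f_s denote the polynomials of the 3-coloring polynomial system of W over the field F₂ = ZMod 2. Then there exist polynomials β_1,…,β_s ∈ F₂[x_v : v ∈ V(W)], each of total degree at most 1, such that 1 = Σ_{i=1}^s β_i f_i; that is, W has a Nullstellensatz certificate of degree one over F₂. -/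
open scoped Classical

/-- The wheel graph on `Option (Fin m)`: a hub vertex (`none`) adjacent to every vertex of
the cycle graph on `m` vertices (the `some` vertices), together with the cycle edges. -/
def wheelGraph (m : ℕ) : SimpleGraph (Option (Fin m)) :=
  SimpleGraph.fromRel (fun a b =>
    a = none ∨ ∃ i j : Fin m, a = some i ∧ b = some j ∧ (SimpleGraph.cycleGraph m).Adj i j)

/-!
Take coefficient `1` on the vertex polynomial of every rim vertex and `0` on the hub's,
`x_{i-1} + x_{i+1}` on the spoke `{hub, i}` and `x_i` on the rim edge `{i, i+1}`.
Over `𝔽₂` the cubes `x_i ^ 3` cancel, every remaining monomial occurs exactly twice as `i` runs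
around the cycle, and the `2n + 1` constant terms add up to `1`.
-/

open Finset SimpleGraph MvPolynomial

section CharTwo

variable {R : Type*} [CommRing R] [CharP R 2]

theorem sum_comp_perm_add_comp_perm_eq_zero {ι : Type*} [Fintype ι] (σ τ : Equiv.Perm ι)
    (f : ι → R) : ∑ i, (f (σ i) + f (τ i)) = 0 := by
  rw [sum_add_distrib, Equiv.sum_comp, Equiv.sum_comp, CharTwo.add_self_eq_zero]

theorem oddWheel_certificate_identity {m : ℕ} [NeZero m] (hm : Odd m) (y : R) (x : Fin m → R) :
    ∑ i, (x i ^ 3 + 1) +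
      (∑ i, (x (i - 1) + x (i + 1)) * (y ^ 2 + y * x i + x i ^ 2) +
        ∑ i, x i * (x i ^ 2 + x i * x (i + 1) + x (i + 1) ^ 2)) = 1 := by
  set a : Fin m → R := fun j => y * x j * x (j + 1) + x j * x (j + 1) ^ 2
  set b : Fin m → R := fun j => y ^ 2 * x j
  have hterm : ∀ i, (x i ^ 3 + 1) + ((x (i - 1) + x (i + 1)) * (y ^ 2 + y * x i + x i ^ 2) +
      x i * (x i ^ 2 + x i * x (i + 1) + x (i + 1) ^ 2)) =
      1 + (a (Equiv.subRight 1 i) + a (Equiv.refl _ i)) +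
        (b (Equiv.subRight 1 i) + b (Equiv.addRight 1 i)) := by
    intro i
    simp only [a, b, Equiv.subRight_apply, Equiv.refl_apply, Equiv.coe_addRight, sub_add_cancel]
    linear_combination (x i ^ 3 + x i ^ 2 * x (i + 1)) * CharTwo.two_eq_zero (R := R)
  rw [← sum_add_distrib, ← sum_add_distrib, sum_congr rfl fun i _ => hterm i, sum_add_distrib,
    sum_add_distrib, sum_comp_perm_add_comp_perm_eq_zero, sum_comp_perm_add_comp_perm_eq_zero,
    sum_const, card_univ, Fintype.card_fin, nsmul_one,
    natCast_eq_one_of_odd_of_two_eq_zero hm CharTwo.two_eq_zero, add_zero, add_zero]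

end CharTwo

theorem Fin.add_one_add_one_ne_self {m : ℕ} [NeZero m] (hm : 2 < m) (i : Fin m) :
    i + 1 + 1 ≠ i := by
  rw [add_assoc, Ne, add_eq_left, Fin.ext_iff, Fin.val_add, Fin.val_one', Fin.val_zero,
    Nat.mod_eq_of_lt (a := 1) (by omega), Nat.mod_eq_of_lt (by omega)]
  omega

namespace SimpleGraph

variable {m : ℕ} [NeZero m]

theorem cycleGraph_adj_iff_eq_add_one (hm : 2 < m) {i j : Fin m} :
    (cycleGraph m).Adj i j ↔ j = i + 1 ∨ i = j + 1 := by
  have hval : ∀ k : Fin m, k.val = 1 ↔ k = 1 := fun k => by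
    rw [Fin.ext_iff, Fin.val_one', Nat.mod_eq_of_lt (by omega)]
  rw [cycleGraph_adj', hval, hval, sub_eq_iff_eq_add, sub_eq_iff_eq_add, add_comm, or_comm,
    add_comm 1 i]

theorem edgeFinset_cycleGraph (hm : 2 < m) :
    (cycleGraph m).edgeFinset = univ.image fun i => s(i, i + 1) := by
  ext e
  induction e with
  | _ i j =>
    simp only [mem_edgeFinset, mem_edgeSet, cycleGraph_adj_iff_eq_add_one hm, mem_image,
      mem_univ, true_and, Sym2.eq_iff]
    constructor
    · rintro (rfl | rfl)
      exacts [⟨i, .inl ⟨rfl, rfl⟩⟩, ⟨j, .inr ⟨rfl, rfl⟩⟩]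
    · rintro ⟨k, ⟨rfl, rfl⟩ | ⟨rfl, rfl⟩⟩
      exacts [.inl rfl, .inr rfl]

theorem sum_edgeFinset_cycleGraph {M : Type*} [AddCommMonoid M] (hm : 2 < m)
    (h : Sym2 (Fin m) → M) :
    ∑ e ∈ (cycleGraph m).edgeFinset, h e = ∑ i, h s(i, i + 1) := by
  refine (edgeFinset_cycleGraph hm ▸ sum_image fun i _ j _ hij => ?_)
  rcases Sym2.eq_iff.mp hij with ⟨h, -⟩ | ⟨rfl, h⟩
  · exact h
  · exact absurd h (Fin.add_one_add_one_ne_self hm j)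

end SimpleGraph

section WheelGraph

variable {m : ℕ}

theorem wheelGraph_adj_none_some (i : Fin m) : (wheelGraph m).Adj none (some i) := by
  simp [wheelGraph]

theorem wheelGraph_adj_some_some {i j : Fin m} :
    (wheelGraph m).Adj (some i) (some j) ↔ (cycleGraph m).Adj i j := by
  simpa [wheelGraph, (cycleGraph m).adj_comm j i] using Adj.ne

@[simps]
def wheelSpoke (m : ℕ) : Fin m ↪ Sym2 (Option (Fin m)) :=
  ⟨fun i => s(none, some i), fun i j h => by simpa using h⟩

theorem mk_none_notMem_map_sym2Map_some {α : Type*} (S : Finset (Sym2 α)) (a : Option α) :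
    s(none, a) ∉ S.map Function.Embedding.some.sym2Map := by
  rw [mem_map]
  rintro ⟨z, -, hz⟩
  have := hz ▸ Sym2.mem_mk_left none a
  simp [Sym2.mem_map] at this

theorem edgeFinset_wheelGraph :
    (wheelGraph m).edgeFinset =
      univ.map (wheelSpoke m) ∪
        (cycleGraph m).edgeFinset.map Function.Embedding.some.sym2Map := by
  ext e
  induction e with
  | _ a b =>
    rw [mem_edgeFinset, mem_edgeSet, mem_union]
    rcases a with _ | i <;> rcases b with _ | j
    · simp only [(wheelGraph m).irrefl, false_iff, not_or]
      exact ⟨by simp, mk_none_notMem_map_sym2Map_some _ none⟩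
    · simp [wheelGraph_adj_none_some]
    · rw [Sym2.eq_swap, (wheelGraph m).adj_comm]
      simp [wheelGraph_adj_none_some]
    · rw [show s(some i, some j) = Function.Embedding.some.sym2Map s(i, j) from rfl, mem_map',
        mem_edgeFinset, mem_edgeSet, wheelGraph_adj_some_some]
      simp

theorem sum_edgeFinset_wheelGraph {M : Type*} [AddCommMonoid M]
    (h : Sym2 (Option (Fin m)) → M) :
    ∑ e ∈ (wheelGraph m).edgeFinset, h e =
      ∑ i, h s(none, some i) + ∑ e ∈ (cycleGraph m).edgeFinset, h (e.map some) := by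
  have hdisj : Disjoint (univ.map (wheelSpoke m))
      ((cycleGraph m).edgeFinset.map Function.Embedding.some.sym2Map) := by
    rw [Finset.disjoint_left]
    rintro _ he
    obtain ⟨i, -, rfl⟩ := mem_map.mp he
    exact mk_none_notMem_map_sym2Map_some _ _
  rw [edgeFinset_wheelGraph, sum_union hdisj, sum_map, sum_map]
  rfl

end WheelGraph

section Certificate

variable (R : Type*) [CommSemiring R] {m : ℕ} [NeZero m]

noncomputable def oddWheelEdgeCoeffAux :
    Option (Fin m) → Option (Fin m) → MvPolynomial (Option (Fin m)) R
  | none, none => 0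
  | none, some i | some i, none => X (some (i - 1)) + X (some (i + 1))
  | some i, some j =>
    (if j = i + 1 then X (some i) else 0) + (if i = j + 1 then X (some j) else 0)

theorem oddWheelEdgeCoeffAux_comm (a b : Option (Fin m)) :
    oddWheelEdgeCoeffAux R a b = oddWheelEdgeCoeffAux R b a := by
  rcases a with _ | i <;> rcases b with _ | j <;> simp only [oddWheelEdgeCoeffAux, add_comm]

noncomputable def oddWheelEdgeCoeff : Sym2 (Option (Fin m)) → MvPolynomial (Option (Fin m)) R :=
  Sym2.lift ⟨oddWheelEdgeCoeffAux R, oddWheelEdgeCoeffAux_comm R⟩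

theorem totalDegree_oddWheelEdgeCoeff_le (e : Sym2 (Option (Fin m))) :
    (oddWheelEdgeCoeff R e).totalDegree ≤ 1 := by
  rw [← mem_restrictTotalDegree]
  have hX : ∀ v, (X v : MvPolynomial (Option (Fin m)) R) ∈ restrictTotalDegree _ R 1 := fun v =>
    (mem_restrictTotalDegree _ _ _).mpr ((totalDegree_monomial_le _ _).trans (by simp))
  induction e with
  | _ a b =>
    rcases a with _ | i <;> rcases b with _ | j
    · exact zero_mem _
    · exact add_mem (hX _) (hX _)
    · exact add_mem (hX _) (hX _)
    · exact add_mem (by split_ifs <;> simp [hX]) (by split_ifs <;> simp [hX])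

theorem oddWheelEdgeCoeff_mk_none_some (i : Fin m) :
    oddWheelEdgeCoeff R s(none, some i) = X (some (i - 1)) + X (some (i + 1)) :=
  rfl

theorem oddWheelEdgeCoeff_mk_some_some_add_one (hm : 2 < m) (i : Fin m) :
    oddWheelEdgeCoeff R s(some i, some (i + 1)) = X (some i) := by
  simp [oddWheelEdgeCoeff, oddWheelEdgeCoeffAux, (Fin.add_one_add_one_ne_self hm i).symm]

end Certificate

/-- For every `n ≥ 1`, the odd wheel on `2n + 2` vertices (hub joined to
an odd cycle on `2n + 1` vertices) has a degree-one Nullstellensatz certificate over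
`𝔽₂ = ZMod 2` for its `3`-coloring polynomial system: there are coefficient polynomials of
total degree at most one, one per vertex polynomial `X v ^ 3 + 1` and one per edge
polynomial `X u ^ 2 + X u * X w + X w ^ 2`, whose combination equals `1`. -/
theorem odd_wheel_degree_one_certificate (n : ℕ) (hn : 1 ≤ n) :
    ∃ (β : Option (Fin (2 * n + 1)) → MvPolynomial (Option (Fin (2 * n + 1))) (ZMod 2))
      (γ : Sym2 (Option (Fin (2 * n + 1))) →
        MvPolynomial (Option (Fin (2 * n + 1))) (ZMod 2)),
      (∀ v, (β v).totalDegree ≤ 1) ∧ (∀ e, (γ e).totalDegree ≤ 1) ∧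
      (1 : MvPolynomial (Option (Fin (2 * n + 1))) (ZMod 2)) =
        (∑ v : Option (Fin (2 * n + 1)), β v * (MvPolynomial.X v ^ 3 + 1)) +
        ∑ e ∈ (wheelGraph (2 * n + 1)).edgeFinset, γ e *
          Sym2.lift ⟨fun u w =>
              MvPolynomial.X u ^ 2 + MvPolynomial.X u * MvPolynomial.X w +
                MvPolynomial.X w ^ 2,
            fun u w => by ring⟩ e := by
  refine ⟨fun v => v.elim 0 fun _ => 1, oddWheelEdgeCoeff (ZMod 2), by rintro (_ | _) <;> simp,
    totalDegree_oddWheelEdgeCoeff_le (ZMod 2), ?_⟩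
  rw [Fintype.sum_option, sum_edgeFinset_wheelGraph, sum_edgeFinset_cycleGraph (by omega)]
  simp only [Option.elim_none, Option.elim_some, zero_mul, zero_add, one_mul, Sym2.map_mk,
    Sym2.lift_mk, oddWheelEdgeCoeff_mk_none_some,
    oddWheelEdgeCoeff_mk_some_some_add_one (ZMod 2) (show 2 < 2 * n + 1 by omega)]
  exact (oddWheel_certificate_identity (odd_two_mul_add_one n) _ _).symm
end
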